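/- Token-local contraction bound: assume ‖k_t‖ = 1 for all t = 1, ..., T, and let q_t = (1 − β_t⟨d_t, s_t⟩)² where s_t = k_t^{⊙2}. Suppose the online learner's iterates d_t satisfy the regret bound ∑_{t=1}^T (h_t(d_t) − h_t(d)) ≤ R for some fixed d, where h_t(d) = ((1 − β_t⟨d, s_t⟩)² − 1)/2. Then ∏_{t=1}^T q_t ≤ (2ε(d) + 2R/T)^T, where ε(d) = (1/(2T)) ∑_{t=1}^T (1 − β_t⟨d, s_t⟩)². -/

import Mathlib

/-! With `r_t = 1 − β_t⟨d_t, s_t⟩` the learner's residual, `q_t = r_t² = 1 + 2h_t(d_t)`, so the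
regret bound controls `∑_t q_t` by `2Tε(d) + 2R`; AM–GM turns this bound on the arithmetic mean
of the `q_t` into the bound on their product. -/

open Finset

theorem Real.prod_le_arith_mean_pow {ι : Type*} (s : Finset ι) (z : ι → ℝ)
    (hz : ∀ i ∈ s, 0 ≤ z i) :
    ∏ i ∈ s, z i ≤ ((∑ i ∈ s, z i) / #s) ^ #s := by
  rcases s.eq_empty_or_nonempty with rfl | hs
  · simp
  have hcard : (0 : ℝ) < #s := by exact_mod_cast hs.card_pos
  have hprod : 0 ≤ ∏ i ∈ s, z i := prod_nonneg hz
  have amgm := Real.geom_mean_le_arith_mean s (fun _ => 1) z (fun _ _ => zero_le_one)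
    (by simpa using hcard) hz
  simp only [Real.rpow_one, one_mul, sum_const, nsmul_eq_mul, mul_one] at amgm
  calc ∏ i ∈ s, z i = ((∏ i ∈ s, z i) ^ (#s : ℝ)⁻¹) ^ #s := by
        rw [← Real.rpow_natCast, ← Real.rpow_mul hprod, inv_mul_cancel₀ hcard.ne', Real.rpow_one]
    _ ≤ ((∑ i ∈ s, z i) / #s) ^ #s := by gcongr

theorem sum_sq_le_of_sum_half_sq_sub_le {ι : Type*} (s : Finset ι) (a b : ι → ℝ) {R : ℝ}
    (hreg : ∑ t ∈ s, ((a t ^ 2 - 1) / 2 - (b t ^ 2 - 1) / 2) ≤ R) :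
    ∑ t ∈ s, a t ^ 2 ≤ ∑ t ∈ s, b t ^ 2 + 2 * R := by
  have hsum : ∑ t ∈ s, ((a t ^ 2 - 1) / 2 - (b t ^ 2 - 1) / 2)
      = (∑ t ∈ s, a t ^ 2 - ∑ t ∈ s, b t ^ 2) / 2 := by
    rw [← sum_sub_distrib, sum_div]
    exact sum_congr rfl fun _ _ => by ring
  linarith

theorem prod_sq_le_of_sum_half_sq_sub_le {ι : Type*} (s : Finset ι) (a b : ι → ℝ) {R : ℝ}
    (hreg : ∑ t ∈ s, ((a t ^ 2 - 1) / 2 - (b t ^ 2 - 1) / 2) ≤ R) :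
    ∏ t ∈ s, a t ^ 2 ≤ ((∑ t ∈ s, b t ^ 2 + 2 * R) / #s) ^ #s :=
  calc ∏ t ∈ s, a t ^ 2 ≤ ((∑ t ∈ s, a t ^ 2) / #s) ^ #s :=
        Real.prod_le_arith_mean_pow s _ fun _ _ => sq_nonneg _
    _ ≤ ((∑ t ∈ s, b t ^ 2 + 2 * R) / #s) ^ #s := by
        gcongr
        exact sum_sq_le_of_sum_half_sq_sub_le s a b hreg

theorem stmt_14_general (K T : ℕ)
    (β : Fin T → ℝ) (dseq : Fin T → Fin K → ℝ) (d : Fin K → ℝ)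
    (s : Fin T → Fin K → ℝ)
    (h : Fin T → (Fin K → ℝ) → ℝ)
    (hh : ∀ t (d' : Fin K → ℝ),
      h t d' = ((1 - β t * ∑ i, d' i * s t i) ^ 2 - 1) / 2)
    (q : Fin T → ℝ)
    (hq : ∀ t, q t = (1 - β t * ∑ i, dseq t i * s t i) ^ 2)
    (R : ℝ) (hreg : ∑ t, (h t (dseq t) - h t d) ≤ R)
    (ε : ℝ)
    (hε : ε = (1 / (2 * (T : ℝ))) * ∑ t, (1 - β t * ∑ i, d i * s t i) ^ 2) :
    ∏ t, q t ≤ (2 * ε + 2 * R / (T : ℝ)) ^ T := by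
  simp only [hh] at hreg
  have hbound : 2 * ε + 2 * R / T
      = (∑ t, (1 - β t * ∑ i, d i * s t i) ^ 2 + 2 * R) / T := by
    rw [hε, add_div]
    ring
  simpa only [hq, hbound, card_univ, Fintype.card_fin] using
    prod_sq_le_of_sum_half_sq_sub_le univ _ _ hreg

/-- Token-local residual contraction bound: with unit keys, `s_t = k_t^{⊙2}`,
`q_t = (1 − β_t⟨d_t, s_t⟩)²`, `h_t(d) = ((1 − β_t⟨d, s_t⟩)² − 1)/2`, and
regret `∑_t (h_t(d_t) − h_t(d)) ≤ R` against a fixed comparator `d`, one has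
`∏_t q_t ≤ (2ε(d) + 2R/T)^T` where `ε(d) = (1/(2T)) ∑_t (1 − β_t⟨d, s_t⟩)²`. -/
theorem stmt_14 (K T : ℕ) (hT : 0 < T)
    (k : Fin T → Fin K → ℝ) (hk : ∀ t, ∑ i, k t i ^ 2 = 1)
    (β : Fin T → ℝ) (dseq : Fin T → Fin K → ℝ) (d : Fin K → ℝ)
    (s : Fin T → Fin K → ℝ) (hs : ∀ t i, s t i = k t i ^ 2)
    (h : Fin T → (Fin K → ℝ) → ℝ)
    (hh : ∀ t (d' : Fin K → ℝ),
      h t d' = ((1 - β t * ∑ i, d' i * s t i) ^ 2 - 1) / 2)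
    (q : Fin T → ℝ)
    (hq : ∀ t, q t = (1 - β t * ∑ i, dseq t i * s t i) ^ 2)
    (R : ℝ) (hreg : ∑ t, (h t (dseq t) - h t d) ≤ R)
    (ε : ℝ)
    (hε : ε = (1 / (2 * (T : ℝ))) * ∑ t, (1 - β t * ∑ i, d i * s t i) ^ 2) :
    ∏ t, q t ≤ (2 * ε + 2 * R / (T : ℝ)) ^ T :=
  stmt_14_general K T β dseq d s h hh q hq R hreg ε hε
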